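/- (PageRank distinguishability bound) Under the same graph hypotheses as Theorem 1 (symmetric nonnegative W with positive degrees, H := W·D⁻¹, normalized Laplacian L̃ with simple eigenvalue 0 and eigenvalues 0 = μ_1 < μ_2 ≤ … ≤ μ_N < 2, μ' := min{μ_2, 2−μ_N} > 0, nonempty subsets L₊, L₋ with seeds p₊ := v_{L₊}, p₋ := v_{L₋}), let 0 < α < 1 and γ > 0. If the positive integer K satisfies K ≥ (1/(μ' − log α))·log[(2(1−α)√(d_max)/γ)·(1/√(d_min₋|L₋|) + 1/√(d_min₊|L₊|))], then (1−α)·α^K·(‖H^K(p₊ − p₋)‖ + ‖H^{K+1}(p₊ − p₋)‖) ≤ γ, where d_max := max_i d_i, d_min₊ := min_{i∈L₊} d_i, d_min₋ := min_{i∈L₋} d_i. -/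

import Mathlib

open Matrix Finset

/-- Euclidean norm of a vector in ℝ^N. -/
noncomputable def eNorm {N : ℕ} (x : Fin N → ℝ) : ℝ := Real.sqrt (∑ i, x i ^ 2)

/-!
`H = D^{1/2} (1 - L̃) D^{-1/2}` is similar to the symmetric matrix `1 - L̃`, whose eigenvalues
`1 - μᵢ` lie in `[-(1 - μ'), 1 - μ']`, except the eigenvalue `1` of the kernel vector `D^{1/2} 𝟙`.
Since `p₊ - p₋` has total mass zero, `D^{-1/2} (p₊ - p₋)` is orthogonal to that vector, so
`‖H^k (p₊ - p₋)‖ ≤ √d_max (1 - μ')^k ‖D^{-1/2} (p₊ - p₋)‖`, and the last norm is at most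
`1/√(d_min₊ |L₊|) + 1/√(d_min₋ |L₋|)` by the triangle inequality.
As `1 - μ' ≤ exp (-μ')`, the left-hand side is then at most a constant times
`exp (-K (μ' - log α))`, which the choice of `K` makes `≤ γ`.
-/

section OrthonormalEigenbasis

variable {n : Type*} [Fintype n] [DecidableEq n] {q : n → n → ℝ}

theorem sum_dotProduct_smul_eq (horth : ∀ i j, q i ⬝ᵥ q j = if i = j then 1 else 0)
    (x : n → ℝ) : ∑ i, (q i ⬝ᵥ x) • q i = x := by
  have hQ : (of q)ᵀ * of q = 1 := by
    rw [mul_eq_one_comm]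
    ext i j
    simpa [mul_apply, one_apply, dotProduct] using horth i j
  calc ∑ i, (q i ⬝ᵥ x) • q i = (of q)ᵀ *ᵥ (of q *ᵥ x) := by
        ext j
        simp [mulVec, dotProduct, Finset.sum_apply, mul_comm]
    _ = x := by rw [mulVec_mulVec, hQ, one_mulVec]

theorem sum_dotProduct_sq_eq (horth : ∀ i j, q i ⬝ᵥ q j = if i = j then 1 else 0)
    (x : n → ℝ) : ∑ i, (q i ⬝ᵥ x) ^ 2 = x ⬝ᵥ x :=
  calc ∑ i, (q i ⬝ᵥ x) ^ 2 = x ⬝ᵥ ∑ i, (q i ⬝ᵥ x) • q i := by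
        rw [dotProduct_sum]
        exact sum_congr rfl fun i _ => by rw [dotProduct_smul, smul_eq_mul, dotProduct_comm x, sq]
    _ = x ⬝ᵥ x := by rw [sum_dotProduct_smul_eq horth]

theorem dotProduct_pow_mulVec_of_mulVec_eq_smul {R : Type*} [CommSemiring R]
    {A : Matrix n n R} (hA : Aᵀ = A) {v : n → R} {ν : R} (hv : A *ᵥ v = ν • v) (k : ℕ)
    (x : n → R) : v ⬝ᵥ (A ^ k *ᵥ x) = ν ^ k * (v ⬝ᵥ x) := by
  induction k with
  | zero => simp
  | succ k ih =>
    rw [pow_succ', ← mulVec_mulVec, dotProduct_mulVec, ← mulVec_transpose, hA, hv,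
      smul_dotProduct, ih, smul_eq_mul, pow_succ', mul_assoc]

variable {A : Matrix n n ℝ} {ν : n → ℝ}

theorem dotProduct_eq_zero_of_orthogonal_to_kernel
    (horth : ∀ i j, q i ⬝ᵥ q j = if i = j then 1 else 0) (hA : Aᵀ = A)
    (heig : ∀ i, A *ᵥ q i = ν i • q i) {i₀ : n} (hν : ∀ i ≠ i₀, ν i ≠ 0) {v x : n → ℝ}
    (hv : A *ᵥ v = 0) (hv0 : v ≠ 0) (hvx : v ⬝ᵥ x = 0) : q i₀ ⬝ᵥ x = 0 := by
  have hcoef : ∀ i ≠ i₀, q i ⬝ᵥ v = 0 := fun i hi => by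
    have := dotProduct_pow_mulVec_of_mulVec_eq_smul hA (heig i) 1 v
    simp only [pow_one, hv, dotProduct_zero] at this
    exact (mul_eq_zero.mp this.symm).resolve_left (hν i hi)
  have hv_eq : v = (q i₀ ⬝ᵥ v) • q i₀ := by
    rw [← Fintype.sum_eq_single (f := fun i => (q i ⬝ᵥ v) • q i) i₀
      fun i hi => by rw [hcoef i hi, zero_smul], sum_dotProduct_smul_eq horth]
  have hc : q i₀ ⬝ᵥ v ≠ 0 := fun h => hv0 (by rw [hv_eq, h, zero_smul])
  rw [hv_eq, smul_dotProduct, smul_eq_mul] at hvx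
  exact (mul_eq_zero.mp hvx).resolve_left hc

theorem dotProduct_self_pow_mulVec_le (horth : ∀ i j, q i ⬝ᵥ q j = if i = j then 1 else 0)
    (hA : Aᵀ = A) (heig : ∀ i, A *ᵥ q i = ν i • q i) {x : n → ℝ} {r : ℝ}
    (hx : ∀ i, |ν i| ≤ r ∨ q i ⬝ᵥ x = 0) (k : ℕ) :
    (A ^ k *ᵥ x) ⬝ᵥ (A ^ k *ᵥ x) ≤ (r ^ k) ^ 2 * (x ⬝ᵥ x) := by
  rw [← sum_dotProduct_sq_eq horth, ← sum_dotProduct_sq_eq horth x, mul_sum]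
  refine sum_le_sum fun i _ => ?_
  rw [dotProduct_pow_mulVec_of_mulVec_eq_smul hA (heig i), mul_pow]
  rcases hx i with hνr | hqx
  · have : (ν i ^ k) ^ 2 ≤ (r ^ k) ^ 2 := by rw [← sq_abs, abs_pow]; gcongr
    exact mul_le_mul_of_nonneg_right this (sq_nonneg _)
  · simp [hqx]

end OrthonormalEigenbasis

section EuclideanNorm

variable {n : ℕ}

theorem eNorm_eq_sqrt_dotProduct (x : Fin n → ℝ) : eNorm x = √(x ⬝ᵥ x) := by
  simp only [eNorm, dotProduct, sq]

theorem eNorm_sub_le (x y : Fin n → ℝ) : eNorm (x - y) ≤ eNorm x + eNorm y := by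
  have h (z : Fin n → ℝ) : eNorm z = ‖WithLp.toLp 2 z‖ := by
    simp [eNorm, EuclideanSpace.norm_eq, sq_abs]
  simpa only [h, WithLp.toLp_sub] using norm_sub_le (WithLp.toLp 2 x) (WithLp.toLp 2 y)

theorem eNorm_le_mul_of_dotProduct_le {x y : Fin n → ℝ} {c : ℝ} (hc : 0 ≤ c)
    (h : x ⬝ᵥ x ≤ c ^ 2 * (y ⬝ᵥ y)) : eNorm x ≤ c * eNorm y := by
  rw [eNorm_eq_sqrt_dotProduct, eNorm_eq_sqrt_dotProduct, ← Real.sqrt_sq hc,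
    ← Real.sqrt_mul (sq_nonneg c)]
  exact Real.sqrt_le_sqrt h

theorem eNorm_diagonal_mulVec_le {g : Fin n → ℝ} {c : ℝ} (hc : 0 ≤ c) (hg : ∀ i, |g i| ≤ c)
    (y : Fin n → ℝ) : eNorm (diagonal g *ᵥ y) ≤ c * eNorm y := by
  refine eNorm_le_mul_of_dotProduct_le hc ?_
  simp only [dotProduct, mulVec_diagonal, mul_sum]
  refine sum_le_sum fun i _ => ?_
  have : g i ^ 2 ≤ c ^ 2 := by rw [← sq_abs]; gcongr; exact hg i
  nlinarith [mul_self_nonneg (y i)]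

theorem eNorm_pow_mulVec_le {q : Fin n → Fin n → ℝ}
    (horth : ∀ i j, q i ⬝ᵥ q j = if i = j then 1 else 0) {A : Matrix (Fin n) (Fin n) ℝ}
    (hA : Aᵀ = A) {ν : Fin n → ℝ} (heig : ∀ i, A *ᵥ q i = ν i • q i) {x : Fin n → ℝ} {r : ℝ}
    (hr : 0 ≤ r) (hx : ∀ i, |ν i| ≤ r ∨ q i ⬝ᵥ x = 0) (k : ℕ) :
    eNorm (A ^ k *ᵥ x) ≤ r ^ k * eNorm x :=
  eNorm_le_mul_of_dotProduct_le (pow_nonneg hr k) (dotProduct_self_pow_mulVec_le horth hA heig hx k)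

end EuclideanNorm

section Seed

variable {n : Type*} [Fintype n] [DecidableEq n]

noncomputable def seed (S : Finset n) : n → ℝ := fun i => if i ∈ S then (#S : ℝ)⁻¹ else 0

theorem sum_seed {S : Finset n} (hS : S.Nonempty) : ∑ i, seed S i = 1 := by
  simp [seed, Finset.sum_ite_mem, hS.card_ne_zero]

end Seed

theorem eNorm_inv_sqrt_diagonal_mulVec_seed_le {n : ℕ} {d : Fin n → ℝ} (hd : ∀ j, 0 < d j)
    {S : Finset (Fin n)} (hS : S.Nonempty) :
    eNorm (diagonal (fun j => (√(d j))⁻¹) *ᵥ seed S) ≤ 1 / √(S.inf' hS d * #S) := by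
  have hmin : 0 < S.inf' hS d := (lt_inf'_iff hS).mpr fun j _ => hd j
  have hcard : (0 : ℝ) < #S := by exact_mod_cast hS.card_pos
  rw [eNorm, one_div, ← Real.sqrt_inv]
  refine Real.sqrt_le_sqrt ?_
  calc ∑ i, (diagonal (fun j => (√(d j))⁻¹) *ᵥ seed S) i ^ 2
      = ∑ i ∈ S, (d i)⁻¹ * ((#S : ℝ)⁻¹) ^ 2 := by
        simp only [mulVec_diagonal, seed, mul_ite, mul_zero, ite_pow, zero_pow two_ne_zero]
        rw [sum_ite_mem, univ_inter]
        exact sum_congr rfl fun i _ => by rw [mul_pow, inv_pow, Real.sq_sqrt (hd i).le]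
    _ ≤ ∑ _i ∈ S, (S.inf' hS d)⁻¹ * ((#S : ℝ)⁻¹) ^ 2 :=
        sum_le_sum fun i hi => by gcongr; exact inf'_le d hi
    _ = (S.inf' hS d * #S)⁻¹ := by
        rw [sum_const, nsmul_eq_mul]; field_simp

theorem eNorm_inv_sqrt_diagonal_mulVec_seed_sub_le {n : ℕ} {d : Fin n → ℝ} (hd : ∀ j, 0 < d j)
    {S T : Finset (Fin n)} (hS : S.Nonempty) (hT : T.Nonempty) :
    eNorm (diagonal (fun j => (√(d j))⁻¹) *ᵥ (seed S - seed T)) ≤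
      1 / √(T.inf' hT d * #T) + 1 / √(S.inf' hS d * #S) := by
  rw [mulVec_sub, add_comm]
  exact (eNorm_sub_le _ _).trans (add_le_add (eNorm_inv_sqrt_diagonal_mulVec_seed_le hd hS)
    (eNorm_inv_sqrt_diagonal_mulVec_seed_le hd hT))

section NormalizedLaplacian

variable {n : Type*} [Fintype n] [DecidableEq n]

noncomputable def normalizedLaplacian (d : n → ℝ) (W : Matrix n n ℝ) : Matrix n n ℝ :=
  diagonal (fun j => (√(d j))⁻¹) * (diagonal d - W) * diagonal (fun j => (√(d j))⁻¹)

variable {d : n → ℝ} {W : Matrix n n ℝ}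

theorem normalizedLaplacian_transpose (hW : W.IsSymm) :
    (normalizedLaplacian d W)ᵀ = normalizedLaplacian d W := by
  simp [normalizedLaplacian, transpose_mul, transpose_sub, hW.eq, Matrix.mul_assoc]

theorem normalizedLaplacian_mulVec_sqrt (hW : W.IsSymm) (hd : ∀ j, d j = ∑ i, W i j)
    (hdpos : ∀ j, 0 < d j) : normalizedLaplacian d W *ᵥ (fun j => √(d j)) = 0 := by
  have hones : diagonal (fun j => (√(d j))⁻¹) *ᵥ (fun j => √(d j)) = fun _ => 1 := by
    ext j
    rw [mulVec_diagonal]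
    exact inv_mul_cancel₀ (Real.sqrt_pos.2 (hdpos j)).ne'
  have hrows : (diagonal d - W) *ᵥ (fun _ => 1) = 0 := by
    ext i
    simp [mulVec, dotProduct, diagonal_apply, hd i, hW.apply]
  rw [normalizedLaplacian, ← mulVec_mulVec, ← mulVec_mulVec, hones, hrows, mulVec_zero]

theorem randomWalk_pow_eq (hdpos : ∀ j, 0 < d j) (k : ℕ) :
    (W * diagonal fun j => (d j)⁻¹) ^ k = diagonal (fun j => √(d j)) *
      (1 - normalizedLaplacian d W) ^ k * diagonal (fun j => (√(d j))⁻¹) := by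
  have hsqrt : ∀ j, √(d j) ≠ 0 := fun j => (Real.sqrt_pos.2 (hdpos j)).ne'
  have hPP' : diagonal (fun j => √(d j)) * diagonal (fun j => (√(d j))⁻¹) = 1 := by
    simp [hsqrt]
  have hP'P : diagonal (fun j => (√(d j))⁻¹) * diagonal (fun j => √(d j)) = 1 := by
    simp [hsqrt]
  have hP'P' : diagonal (fun j => (√(d j))⁻¹) * diagonal (fun j => (√(d j))⁻¹) =
      diagonal fun j => (d j)⁻¹ := by
    simp [← mul_inv, Real.mul_self_sqrt (hdpos _).le]
  have hDDinv : diagonal d * diagonal (fun j => (d j)⁻¹) = 1 := by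
    simp [(hdpos _).ne']
  let u : (Matrix n n ℝ)ˣ := ⟨_, _, hPP', hP'P⟩
  have hconj : W * diagonal (fun j => (d j)⁻¹) =
      u * (1 - normalizedLaplacian d W) * (u⁻¹ : (Matrix n n ℝ)ˣ) := by
    simp only [u, Units.inv_mk, normalizedLaplacian, mul_sub, sub_mul, Matrix.mul_one, hPP',
      Matrix.mul_assoc, hP'P']
    rw [hDDinv, Matrix.mul_one, hPP', ← Matrix.mul_assoc (diagonal fun j => √(d j)), hPP',
      Matrix.one_mul, sub_sub_cancel]
  rw [hconj, Units.conj_pow]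
  rfl

end NormalizedLaplacian

theorem eNorm_randomWalk_pow_mulVec_le {n : ℕ} {W : Matrix (Fin n) (Fin n) ℝ} {d : Fin n → ℝ}
    (hW : W.IsSymm) (hd : ∀ j, d j = ∑ i, W i j) (hdpos : ∀ j, 0 < d j)
    {q : Fin n → Fin n → ℝ} {μ : Fin n → ℝ}
    (horth : ∀ i j, q i ⬝ᵥ q j = if i = j then 1 else 0)
    (heig : ∀ i, normalizedLaplacian d W *ᵥ q i = μ i • q i) {i₀ : Fin n}
    (hμ : ∀ i ≠ i₀, μ i ≠ 0) {r : ℝ} (hr : 0 ≤ r) (hgap : ∀ i ≠ i₀, |1 - μ i| ≤ r)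
    {dmax : ℝ} (hdmax : ∀ j, d j ≤ dmax) {y : Fin n → ℝ} (hy : ∑ j, y j = 0) (k : ℕ) :
    eNorm ((W * diagonal fun j => (d j)⁻¹) ^ k *ᵥ y) ≤
      √dmax * (r ^ k * eNorm (diagonal (fun j => (√(d j))⁻¹) *ᵥ y)) := by
  set x := diagonal (fun j => (√(d j))⁻¹) *ᵥ y
  have hsqrt : ∀ j, √(d j) ≠ 0 := fun j => (Real.sqrt_pos.2 (hdpos j)).ne'
  have hL := normalizedLaplacian_transpose (d := d) hW
  have hx₀ : q i₀ ⬝ᵥ x = 0 := by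
    refine dotProduct_eq_zero_of_orthogonal_to_kernel horth hL heig hμ
      (normalizedLaplacian_mulVec_sqrt hW hd hdpos) (fun h => hsqrt i₀ (congrFun h i₀)) ?_
    simp [x, dotProduct, mulVec_diagonal, hsqrt, hy]
  have hA : (1 - normalizedLaplacian d W)ᵀ = 1 - normalizedLaplacian d W := by
    rw [transpose_sub, transpose_one, hL]
  have heig' : ∀ i, (1 - normalizedLaplacian d W) *ᵥ q i = (1 - μ i) • q i := fun i => by
    rw [sub_mulVec, one_mulVec, heig, sub_smul, one_smul]
  rw [randomWalk_pow_eq hdpos, ← mulVec_mulVec, ← mulVec_mulVec]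
  calc _ ≤ √dmax * eNorm ((1 - normalizedLaplacian d W) ^ k *ᵥ x) :=
        eNorm_diagonal_mulVec_le (Real.sqrt_nonneg _)
          (fun j => (abs_of_nonneg (Real.sqrt_nonneg _)).trans_le (Real.sqrt_le_sqrt (hdmax j))) _
    _ ≤ _ := by
        gcongr
        refine eNorm_pow_mulVec_le horth hA heig' hr (fun i => ?_) k
        by_cases hi : i = i₀
        · exact .inr (hi ▸ hx₀)
        · exact .inl (hgap i hi)

theorem abs_one_sub_le_one_sub_min {n : ℕ} {μ : Fin (n + 2) → ℝ} (hmono : Monotone μ)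
    {i : Fin (n + 2)} (hi : i ≠ 0) : |1 - μ i| ≤ 1 - min (μ 1) (2 - μ (Fin.last (n + 1))) := by
  have h₁ : μ 1 ≤ μ i := hmono (Fin.one_le_of_ne_zero hi)
  have h₂ : μ i ≤ μ (Fin.last (n + 1)) := hmono (Fin.le_last i)
  rw [abs_le]
  constructor <;> linarith [min_le_left (μ 1) (2 - μ (Fin.last (n + 1))),
    min_le_right (μ 1) (2 - μ (Fin.last (n + 1)))]

theorem mul_pow_le_one_of_log_div_le {C ρ c : ℝ} {K : ℕ} (hC : 0 ≤ C) (hρ : 0 ≤ ρ)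
    (hρc : ρ ≤ Real.exp (-c)) (hc : 0 < c) (hK : Real.log C / c ≤ K) : C * ρ ^ K ≤ 1 := by
  rcases hC.eq_or_lt with rfl | hC
  · simp
  calc C * ρ ^ K ≤ C * Real.exp (-c) ^ K := by gcongr
    _ = Real.exp (Real.log C + K * -c) := by rw [Real.exp_add, Real.exp_log hC, Real.exp_nat_mul]
    _ ≤ 1 := Real.exp_le_one_iff.2 (by linarith [(div_le_iff₀ hc).1 hK])

theorem mul_one_sub_le_exp_neg_sub_log {α : ℝ} (hα : 0 < α) (t : ℝ) :
    α * (1 - t) ≤ Real.exp (-(t - Real.log α)) := by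
  rw [neg_sub, Real.exp_sub, Real.exp_log hα, div_eq_mul_inv, ← Real.exp_neg]
  gcongr
  linarith [Real.add_one_le_exp (-t)]

theorem pagerank_distinguishability_bound_general
    (N : ℕ) (W : Matrix (Fin (N + 2)) (Fin (N + 2)) ℝ)
    (hsym : W.IsSymm)
    (d : Fin (N + 2) → ℝ) (hd : ∀ j, d j = ∑ i, W i j)
    (hdpos : ∀ j, 0 < d j)
    (H : Matrix (Fin (N + 2)) (Fin (N + 2)) ℝ)
    (hH : H = W * Matrix.diagonal (fun j => (d j)⁻¹))
    (Ltil : Matrix (Fin (N + 2)) (Fin (N + 2)) ℝ)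
    (hLtil : Ltil = Matrix.diagonal (fun j => (Real.sqrt (d j))⁻¹) *
      (Matrix.diagonal d - W) * Matrix.diagonal (fun j => (Real.sqrt (d j))⁻¹))
    (q : Fin (N + 2) → (Fin (N + 2) → ℝ)) (μ : Fin (N + 2) → ℝ)
    (horth : ∀ i j, q i ⬝ᵥ q j = if i = j then 1 else 0)
    (heig : ∀ i, Ltil.mulVec (q i) = μ i • q i)
    (hmono : Monotone μ) (hsimple : ∀ i, i ≠ 0 → 0 < μ i)
    (hμlt2 : ∀ i, μ i < 2)
    (μ' : ℝ) (hμ' : μ' = min (μ 1) (2 - μ (Fin.last (N + 1))))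
    (dmax : ℝ) (hdmax : dmax = Finset.univ.sup' Finset.univ_nonempty d)
    (Lp Lm : Finset (Fin (N + 2))) (hLp : Lp.Nonempty) (hLm : Lm.Nonempty)
    (pp pm : Fin (N + 2) → ℝ)
    (hpp : ∀ i, pp i = if i ∈ Lp then ((Lp.card : ℝ))⁻¹ else 0)
    (hpm : ∀ i, pm i = if i ∈ Lm then ((Lm.card : ℝ))⁻¹ else 0)
    (dminp dminm : ℝ) (hdminp : dminp = Lp.inf' hLp d) (hdminm : dminm = Lm.inf' hLm d)
    (α : ℝ) (hα0 : 0 < α) (hα1 : α < 1)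
    (γ : ℝ) (hγ : 0 < γ)
    (K : ℕ)
    (hKbound : (K : ℝ) ≥ (1 / (μ' - Real.log α)) *
      Real.log ((2 * (1 - α) * Real.sqrt dmax / γ) *
        (1 / Real.sqrt (dminm * (Lm.card : ℝ)) + 1 / Real.sqrt (dminp * (Lp.card : ℝ))))) :
    (1 - α) * α ^ K *
      (eNorm ((H ^ K).mulVec (pp - pm)) + eNorm ((H ^ (K + 1)).mulVec (pp - pm))) ≤ γ := by
  obtain rfl : pp = seed Lp := funext hpp
  obtain rfl : pm = seed Lm := funext hpm
  subst hH hLtil hdminp hdminm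
  set B := 1 / √(Lm.inf' hLm d * #Lm) + 1 / √(Lp.inf' hLp d * #Lp)
  have hgap : ∀ i ≠ 0, |1 - μ i| ≤ 1 - μ' := fun i hi => hμ' ▸ abs_one_sub_le_one_sub_min hmono hi
  have hr : 0 ≤ 1 - μ' := (abs_nonneg _).trans (hgap 1 one_ne_zero)
  have hμ'pos : 0 < μ' := hμ' ▸ lt_min (hsimple 1 one_ne_zero) (by linarith [hμlt2 (Fin.last _)])
  have hwalk : ∀ k, eNorm ((W * diagonal fun j => (d j)⁻¹) ^ k *ᵥ (seed Lp - seed Lm)) ≤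
      √dmax * ((1 - μ') ^ k * B) := fun k => by
    refine (eNorm_randomWalk_pow_mulVec_le hsym hd hdpos horth heig (fun i hi => (hsimple i hi).ne')
      hr hgap (fun j => hdmax ▸ le_sup' d (mem_univ j)) ?_ k).trans ?_
    · simp [sum_sub_distrib, sum_seed hLp, sum_seed hLm]
    · exact mul_le_mul_of_nonneg_left (mul_le_mul_of_nonneg_left
        (eNorm_inv_sqrt_diagonal_mulVec_seed_sub_le hdpos hLp hLm) (pow_nonneg hr k))
        (Real.sqrt_nonneg _)
  have hC : 0 ≤ 2 * (1 - α) * √dmax / γ * B := by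
    have : 0 ≤ 1 - α := by linarith
    positivity
  have hdecay := mul_pow_le_one_of_log_div_le hC (by positivity)
    (mul_one_sub_le_exp_neg_sub_log hα0 μ')
    (by linarith [Real.log_neg hα0 hα1]) (by simpa [one_div, inv_mul_eq_div] using hKbound)
  have hpow : (1 - μ') ^ (K + 1) ≤ (1 - μ') ^ K := pow_le_pow_of_le_one hr (by linarith) K.le_succ
  calc _ ≤ (1 - α) * α ^ K * (√dmax * ((1 - μ') ^ K * B) + √dmax * ((1 - μ') ^ K * B)) := by
        gcongr
        · exact hwalk K
        · exact (hwalk (K + 1)).trans (by gcongr)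
    _ = γ * (2 * (1 - α) * √dmax / γ * B * (α * (1 - μ')) ^ K) := by rw [mul_pow]; field_simp; ring
    _ ≤ γ := mul_le_of_le_one_right hγ.le hdecay

/-- PageRank distinguishability bound: if
K ≥ (1/(μ'−log α))·log[(2(1−α)√(d_max)/γ)·(1/√(d_min₋|L₋|) + 1/√(d_min₊|L₊|))],
then (1−α)·α^K·(‖H^K(p₊−p₋)‖ + ‖H^{K+1}(p₊−p₋)‖) ≤ γ.
(N ≥ 2 is encoded by using matrices of size N+2.) -/
theorem pagerank_distinguishability_bound
    (N : ℕ) (W : Matrix (Fin (N + 2)) (Fin (N + 2)) ℝ)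
    (hsym : W.IsSymm) (hnn : ∀ i j, 0 ≤ W i j)
    (d : Fin (N + 2) → ℝ) (hd : ∀ j, d j = ∑ i, W i j)
    (hdpos : ∀ j, 0 < d j)
    (H : Matrix (Fin (N + 2)) (Fin (N + 2)) ℝ)
    (hH : H = W * Matrix.diagonal (fun j => (d j)⁻¹))
    (Ltil : Matrix (Fin (N + 2)) (Fin (N + 2)) ℝ)
    (hLtil : Ltil = Matrix.diagonal (fun j => (Real.sqrt (d j))⁻¹) *
      (Matrix.diagonal d - W) * Matrix.diagonal (fun j => (Real.sqrt (d j))⁻¹))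
    (q : Fin (N + 2) → (Fin (N + 2) → ℝ)) (μ : Fin (N + 2) → ℝ)
    (horth : ∀ i j, q i ⬝ᵥ q j = if i = j then 1 else 0)
    (heig : ∀ i, Ltil.mulVec (q i) = μ i • q i)
    (hmono : Monotone μ) (hμ0 : μ 0 = 0) (hsimple : ∀ i, i ≠ 0 → 0 < μ i)
    (hμlt2 : ∀ i, μ i < 2)
    (μ' : ℝ) (hμ' : μ' = min (μ 1) (2 - μ (Fin.last (N + 1))))
    (dmax : ℝ) (hdmax : dmax = Finset.univ.sup' Finset.univ_nonempty d)
    (Lp Lm : Finset (Fin (N + 2))) (hLp : Lp.Nonempty) (hLm : Lm.Nonempty)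
    (pp pm : Fin (N + 2) → ℝ)
    (hpp : ∀ i, pp i = if i ∈ Lp then ((Lp.card : ℝ))⁻¹ else 0)
    (hpm : ∀ i, pm i = if i ∈ Lm then ((Lm.card : ℝ))⁻¹ else 0)
    (dminp dminm : ℝ) (hdminp : dminp = Lp.inf' hLp d) (hdminm : dminm = Lm.inf' hLm d)
    (α : ℝ) (hα0 : 0 < α) (hα1 : α < 1)
    (γ : ℝ) (hγ : 0 < γ)
    (K : ℕ) (hK : 1 ≤ K)
    (hKbound : (K : ℝ) ≥ (1 / (μ' - Real.log α)) *
      Real.log ((2 * (1 - α) * Real.sqrt dmax / γ) *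
        (1 / Real.sqrt (dminm * (Lm.card : ℝ)) + 1 / Real.sqrt (dminp * (Lp.card : ℝ))))) :
    (1 - α) * α ^ K *
      (eNorm ((H ^ K).mulVec (pp - pm)) + eNorm ((H ^ (K + 1)).mulVec (pp - pm))) ≤ γ :=
  pagerank_distinguishability_bound_general N W hsym d hd hdpos H hH Ltil hLtil q μ horth heig hmono
    hsimple hμlt2 μ' hμ' dmax hdmax Lp Lm hLp hLm pp pm hpp hpm dminp dminm hdminp hdminm α hα0 hα1
    γ hγ K hKbound
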